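/- arXiv:1704.08055 — 12 statements merged into one kernel-verified Lean document; each statement's English description precedes it below -/
import Mathlib

section
/- Let M = img(t_L♯) ⊆ O^{A*}, a T-subalgebra of O^{A*}. Then: (i) for every m ∈ M and a ∈ A, the derivative (λv. m(av)) again belongs to M; (ii) the T-automaton M_L with state space M, initial state t_L(ε), output map out(m) = m(ε), and transition map δ(m)(a) = (λv. m(av)) is well defined (out and δ are T-algebra homomorphisms), and it accepts L: its observability map applied to its initial state equals L. -/
/-- A monad on the category of sets, given by an endofunctor `T` with unit `pure` (η)
and multiplication `mult` (μ), satisfying functoriality, naturality and the monad laws. -/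
structure SetMonad where
  T : Type → Type
  map : {X Y : Type} → (X → Y) → T X → T Y
  pure : {X : Type} → X → T X
  mult : {X : Type} → T (T X) → T X
  map_id : ∀ {X : Type} (t : T X), map id t = t
  map_comp : ∀ {X Y Z : Type} (g : Y → Z) (f : X → Y) (t : T X),
    map (g ∘ f) t = map g (map f t)
  pure_natural : ∀ {X Y : Type} (f : X → Y) (x : X), map f (pure x) = pure (f x)
  mult_natural : ∀ {X Y : Type} (f : X → Y) (t : T (T X)),
    map f (mult t) = mult (map (map f) t)
  mult_pure : ∀ {X : Type} (t : T X), mult (pure t) = t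
  mult_map_pure : ∀ {X : Type} (t : T X), mult (map pure t) = t
  mult_assoc : ∀ {X : Type} (t : T (T (T X))), mult (mult t) = mult (map mult t)

/-- An Eilenberg-Moore algebra `(carrier, str)` for the monad `M`. -/
structure AlgOver (M : SetMonad) where
  carrier : Type
  str : M.T carrier → carrier
  str_pure : ∀ x, str (M.pure x) = x
  str_mult : ∀ t, str (M.mult t) = str (M.map str t)

/-- `f` is a `T`-algebra homomorphism from `X` to `Y`: `f ∘ h = k ∘ T f`. -/
def IsHom (M : SetMonad) (X Y : AlgOver M) (f : X.carrier → Y.carrier) : Prop :=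
  ∀ t : M.T X.carrier, f (X.str t) = Y.str (M.map f t)

/-- The free `T`-algebra `(T U, μ_U)` on a set `U`. -/
def freeAlg (M : SetMonad) (U : Type) : AlgOver M where
  carrier := M.T U
  str := M.mult
  str_pure := M.mult_pure
  str_mult := M.mult_assoc

/-- The free `T`-extension `g♯ = v ∘ T g : T U → V` of a function `g : U → V`
into a `T`-algebra `(V, v)`. -/
def extAlg (M : SetMonad) {U : Type} (V : AlgOver M) (g : U → V.carrier) :
    M.T U → V.carrier :=
  fun t => V.str (M.map g t)

/-- The pointwise `T`-algebra structure on `V^A` for a `T`-algebra `V`. -/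
def powAlg (M : SetMonad) (A : Type) (V : AlgOver M) : AlgOver M where
  carrier := A → V.carrier
  str := fun t a => V.str (M.map (fun g => g a) t)
  str_pure := by
    intro x
    funext a
    show V.str (M.map (fun g => g a) (M.pure x)) = x a
    rw [M.pure_natural]
    exact V.str_pure _
  str_mult := by
    intro t
    funext a
    show V.str (M.map (fun g => g a) (M.mult t)) =
      V.str (M.map (fun g => g a) (M.map (fun t a => V.str (M.map (fun g => g a) t)) t))
    rw [M.mult_natural, V.str_mult, ← M.map_comp, ← M.map_comp]
    rfl

/-- The residual-language map `t_L : A* → O^{A*}`, `t_L(u)(v) = L(uv)`. -/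
def tLang (A : Type) {Oc : Type} (L : List A → Oc) : List A → List A → Oc :=
  fun u v => L (u ++ v)

/-- The free `T`-extension `t_L♯ : T(A*) → O^{A*}` of `t_L`. -/
def tLangS (M : SetMonad) (A : Type) (O : AlgOver M) (L : List A → O.carrier) :
    M.T (List A) → List A → O.carrier :=
  extAlg M (powAlg M (List A) O) (tLang A L)

/-!
`t_L♯` is a homomorphism out of the free algebra `T(A*)`, so its image is a subalgebra of
`O^{A*}`. Taking the `a`-derivative is precomposition with `a :: ·`, a homomorphism of
pointwise algebras, and since `t_L(ua)` is the `a`-derivative of `t_L(u)`, the derivative of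
`t_L♯(t)` is `t_L♯(T(· ++ [a]) t)`. Reading `w` from `t_L(ε)` leads to `t_L(w)`, whose value
at `ε` is `L(w)`.
-/

section Algebras

variable {M : SetMonad}

theorem IsHom.comp {X Y Z : AlgOver M} {g : Y.carrier → Z.carrier} {f : X.carrier → Y.carrier}
    (hg : IsHom M Y Z g) (hf : IsHom M X Y f) : IsHom M X Z (g ∘ f) := fun t => by
  rw [Function.comp_apply, hf, hg, M.map_comp]

theorem extAlg_pure {U : Type} (V : AlgOver M) (g : U → V.carrier) (u : U) :
    extAlg M V g (M.pure u) = g u := by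
  rw [extAlg, M.pure_natural, V.str_pure]

theorem extAlg_map {U W : Type} (V : AlgOver M) (g : W → V.carrier) (f : U → W) (t : M.T U) :
    extAlg M V g (M.map f t) = extAlg M V (g ∘ f) t := by
  rw [extAlg, extAlg, M.map_comp]

theorem isHom_extAlg {U : Type} (V : AlgOver M) (g : U → V.carrier) :
    IsHom M (freeAlg M U) V (extAlg M V g) := fun (t : M.T (M.T U)) => by
  change V.str (M.map g (M.mult t)) = V.str (M.map (fun s => V.str (M.map g s)) t)
  rw [M.mult_natural, V.str_mult, ← M.map_comp]
  rfl

theorem IsHom.comp_extAlg {X Y : AlgOver M} {h : X.carrier → Y.carrier} (hh : IsHom M X Y h)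
    {U : Type} (g : U → X.carrier) (t : M.T U) :
    h (extAlg M X g t) = extAlg M Y (h ∘ g) t := by
  rw [extAlg, hh, extAlg, M.map_comp]

def IsSubalg (X : AlgOver M) (S : Set X.carrier) : Prop :=
  ∀ t : M.T S, X.str (M.map Subtype.val t) ∈ S

def AlgOver.restrict (X : AlgOver M) {S : Set X.carrier} (hS : IsSubalg X S) : AlgOver M where
  carrier := S
  str t := ⟨X.str (M.map Subtype.val t), hS t⟩
  str_pure x := Subtype.ext <| by
    change X.str (M.map Subtype.val (M.pure x)) = x.1
    rw [M.pure_natural, X.str_pure]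
  str_mult t := Subtype.ext <| by
    change X.str (M.map Subtype.val (M.mult t)) =
      X.str (M.map Subtype.val (M.map (fun s => ⟨X.str (M.map Subtype.val s), hS s⟩) t))
    rw [M.mult_natural, X.str_mult, ← M.map_comp, ← M.map_comp]
    rfl

theorem isHom_subtype_val {X : AlgOver M} {S : Set X.carrier} (hS : IsSubalg X S) :
    IsHom M (X.restrict hS) X Subtype.val := fun _ => rfl

theorem IsHom.restrict {X Y : AlgOver M} {f : X.carrier → Y.carrier} (hf : IsHom M X Y f)
    {S : Set X.carrier} {S' : Set Y.carrier} (hS : IsSubalg X S) (hS' : IsSubalg Y S')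
    (hfS : ∀ x ∈ S, f x ∈ S') :
    IsHom M (X.restrict hS) (Y.restrict hS') (fun x => ⟨f x.1, hfS x.1 x.2⟩) := fun (t : M.T S) =>
  Subtype.ext <| by
    change f (X.str (M.map Subtype.val t)) =
      Y.str (M.map Subtype.val (M.map (fun x : S => (⟨f x.1, hfS x.1 x.2⟩ : S')) t))
    rw [hf, ← M.map_comp, ← M.map_comp]
    rfl

theorem isSubalg_range {X Y : AlgOver M} {f : X.carrier → Y.carrier} (hf : IsHom M X Y f) :
    IsSubalg Y (Set.range f) := fun t => by
  choose s hs using fun y : Set.range f => y.2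
  have hfs : f ∘ s = Subtype.val := funext hs
  refine ⟨X.str (M.map s t), ?_⟩
  rw [hf, ← M.map_comp, hfs]

theorem isHom_eval (V : AlgOver M) {A : Type} (a : A) :
    IsHom M (powAlg M A V) V (fun g => g a) := fun _ => rfl

theorem isHom_comp_right (V : AlgOver M) {A B : Type} (φ : B → A) :
    IsHom M (powAlg M A V) (powAlg M B V) (fun g => g ∘ φ) := fun (t : M.T (A → V.carrier)) =>
  funext fun b => by
    change V.str (M.map (fun g : A → V.carrier => g (φ b)) t) =
      V.str (M.map (fun g : B → V.carrier => g b) (M.map (· ∘ φ) t))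
    rw [← M.map_comp]
    rfl

end Algebras

section Derivatives

variable {A X : Type}

def derivOn {S : Set (List A → X)} (hS : ∀ m ∈ S, ∀ a, m ∘ List.cons a ∈ S) (m : S) (a : A) :
    S :=
  ⟨m.1 ∘ List.cons a, hS m.1 m.2 a⟩

theorem foldl_derivOn_apply {S : Set (List A → X)} (hS : ∀ m ∈ S, ∀ a, m ∘ List.cons a ∈ S)
    (w : List A) (m : S) (v : List A) : (List.foldl (derivOn hS) m w).1 v = m.1 (w ++ v) := by
  induction w generalizing m with
  | nil => rfl
  | cons a w ih => exact ih (derivOn hS m a)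

theorem tLang_append_singleton (L : List A → X) (u : List A) (a : A) :
    tLang A L (u ++ [a]) = tLang A L u ∘ List.cons a := by
  funext v
  simp [tLang]

variable {M : SetMonad} {O : AlgOver M} {L : List A → O.carrier}

theorem tLangS_comp_cons (t : M.T (List A)) (a : A) :
    tLangS M A O L t ∘ List.cons a = tLangS M A O L (M.map (· ++ [a]) t) := by
  have hcomp : (· ∘ List.cons a) ∘ tLang A L = tLang A L ∘ (· ++ [a]) :=
    funext fun u => (tLang_append_singleton L u a).symm
  exact ((isHom_comp_right O (List.cons a)).comp_extAlg _ t).trans <|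
    (congrArg (extAlg M (powAlg M (List A) O) · t) hcomp).trans (extAlg_map _ _ _ t).symm

theorem comp_cons_mem_range_tLangS :
    ∀ m ∈ Set.range (tLangS M A O L), ∀ a, m ∘ List.cons a ∈ Set.range (tLangS M A O L) := by
  rintro _ ⟨t, rfl⟩ a
  exact ⟨_, (tLangS_comp_cons t a).symm⟩

end Derivatives

theorem stmt3_general (M : SetMonad) (A : Type) (O : AlgOver M)
    (L : List A → O.carrier) :
    (∀ m ∈ Set.range (tLangS M A O L), ∀ a : A,
      (fun v => m (a :: v)) ∈ Set.range (tLangS M A O L)) ∧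
    ∃ (str : M.T ↥(Set.range (tLangS M A O L)) → ↥(Set.range (tLangS M A O L)))
      (δ : ↥(Set.range (tLangS M A O L)) → A → ↥(Set.range (tLangS M A O L)))
      (initmem : tLang A L [] ∈ Set.range (tLangS M A O L)),
      -- `str` is a `T`-algebra structure on `img(t_L♯)` …
      (∀ x, str (M.pure x) = x) ∧
      (∀ t, str (M.mult t) = str (M.map str t)) ∧
      -- … making the inclusion into `O^{A*}` a `T`-algebra homomorphism
      (∀ t, (str t).1 = (powAlg M (List A) O).str (M.map Subtype.val t)) ∧
      -- `δ` is the derivative transition map `δ(m)(a)(v) = m(av)` …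
      (∀ m a v, (δ m a).1 v = m.1 (a :: v)) ∧
      -- … and it is a `T`-algebra homomorphism into the pointwise power algebra
      (∀ t a, δ (str t) a = str (M.map (fun m => δ m a) t)) ∧
      -- the output map `out(m) = m(ε)` is a `T`-algebra homomorphism
      (∀ t, (str t).1 [] = O.str (M.map (fun m => m.1 []) t)) ∧
      -- the observability map applied to the initial state `t_L(ε)` equals `L`
      (∀ w : List A, (List.foldl δ ⟨tLang A L [], initmem⟩ w).1 [] = L w) := by
  have hSub : IsSubalg (powAlg M (List A) O) (Set.range (tLangS M A O L)) :=
    isSubalg_range (isHom_extAlg _ _)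
  have hDer := comp_cons_mem_range_tLangS (M := M) (O := O) (L := L)
  let Q := (powAlg M (List A) O).restrict hSub
  refine ⟨hDer, Q.str, derivOn hDer, ⟨M.pure [], extAlg_pure _ _ _⟩, Q.str_pure, Q.str_mult,
    fun _ => rfl, fun _ _ _ => rfl,
    fun t a => (isHom_comp_right O (List.cons a)).restrict hSub hSub (fun m hm => hDer m hm a) t,
    (isHom_eval O []).comp (isHom_subtype_val hSub), fun w => ?_⟩
  rw [foldl_derivOn_apply]
  simp only [tLang, List.nil_append, List.append_nil]

/-- the image `M = img(t_L♯) ⊆ O^{A*}` is closed under derivatives, and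
the minimal `T`-automaton `M_L` on it (with initial state `t_L(ε)`, output `m(ε)` and
transitions `δ(m)(a) = λv. m(av)`) is well defined (its state space is a `T`-subalgebra
of `O^{A*}` and `out`, `δ` are `T`-algebra homomorphisms) and accepts `L`. -/
theorem stmt3 (M : SetMonad) (A : Type) [Finite A] (O : AlgOver M)
    (L : List A → O.carrier) :
    (∀ m ∈ Set.range (tLangS M A O L), ∀ a : A,
      (fun v => m (a :: v)) ∈ Set.range (tLangS M A O L)) ∧
    ∃ (str : M.T ↥(Set.range (tLangS M A O L)) → ↥(Set.range (tLangS M A O L)))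
      (δ : ↥(Set.range (tLangS M A O L)) → A → ↥(Set.range (tLangS M A O L)))
      (initmem : tLang A L [] ∈ Set.range (tLangS M A O L)),
      -- `str` is a `T`-algebra structure on `img(t_L♯)` …
      (∀ x, str (M.pure x) = x) ∧
      (∀ t, str (M.mult t) = str (M.map str t)) ∧
      -- … making the inclusion into `O^{A*}` a `T`-algebra homomorphism
      (∀ t, (str t).1 = (powAlg M (List A) O).str (M.map Subtype.val t)) ∧
      -- `δ` is the derivative transition map `δ(m)(a)(v) = m(av)` …
      (∀ m a v, (δ m a).1 v = m.1 (a :: v)) ∧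
      -- … and it is a `T`-algebra homomorphism into the pointwise power algebra
      (∀ t a, δ (str t) a = str (M.map (fun m => δ m a) t)) ∧
      -- the output map `out(m) = m(ε)` is a `T`-algebra homomorphism
      (∀ t, (str t).1 [] = O.str (M.map (fun m => m.1 []) t)) ∧
      -- the observability map applied to the initial state `t_L(ε)` equals `L`
      (∀ w : List A, (List.foldl δ ⟨tLang A L [], initmem⟩ w).1 [] = L w) :=
  stmt3_general M A O L
end

section
/- Assume the monad T preserves finite sets, i.e., T X is finite whenever X is finite. Then the image of t_L : A* → O^{A*} is finite if and only if the image of its free T-extension t_L♯ : T(A*) → O^{A*} is finite. (Equivalently: the minimal Moore automaton accepting L is finite if and only if the minimal T-automaton accepting L is finite, since their state spaces are img(t_L) and img(t_L♯) respectively.) -/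
/-! Since `g = g♯ ∘ η`, the image of `g` lies in that of `g♯`. Conversely `g♯` factors as
`T U → T (img g) → V`, through `T` applied to the corestriction of `g` to its image, and
`T (img g)` is finite when `img g` is. -/

namespace SetMonad

variable (M : SetMonad) {U : Type} (V : AlgOver M) (g : U → V.carrier)

theorem extAlg_pure (u : U) : extAlg M V g (M.pure u) = g u := by
  rw [extAlg, M.pure_natural, V.str_pure]

theorem extAlg_eq_str_map_rangeFactorization (t : M.T U) :
    extAlg M V g t = V.str (M.map Subtype.val (M.map (Set.rangeFactorization g) t)) := by
  rw [extAlg, ← M.map_comp, Set.coe_comp_rangeFactorization]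

theorem range_subset_range_extAlg : Set.range g ⊆ Set.range (extAlg M V g) := by
  rintro _ ⟨u, rfl⟩
  exact ⟨M.pure u, extAlg_pure M V g u⟩

theorem range_extAlg_subset :
    Set.range (extAlg M V g) ⊆
      Set.range fun s : M.T (Set.range g) => V.str (M.map Subtype.val s) := by
  rintro _ ⟨t, rfl⟩
  exact ⟨_, (extAlg_eq_str_map_rangeFactorization M V g t).symm⟩

theorem finite_range_extAlg_iff (hfin : ∀ X : Type, Finite X → Finite (M.T X)) :
    (Set.range (extAlg M V g)).Finite ↔ (Set.range g).Finite := by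
  refine ⟨fun h => h.subset (range_subset_range_extAlg M V g), fun h => ?_⟩
  have : Finite (M.T (Set.range g)) := hfin _ h.to_subtype
  exact (Set.finite_range _).subset (range_extAlg_subset M V g)

end SetMonad

theorem stmt4_general (M : SetMonad) (hfin : ∀ X : Type, Finite X → Finite (M.T X))
    (A : Type) (O : AlgOver M) (L : List A → O.carrier) :
    (Set.range (tLang A L)).Finite ↔ (Set.range (tLangS M A O L)).Finite :=
  (M.finite_range_extAlg_iff (powAlg M (List A) O) (tLang A L) hfin).symm

/-- if `T` preserves finite sets, then the image of `t_L` is finite iff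
the image of its free `T`-extension `t_L♯` is finite (minimal Moore automaton finite
iff minimal `T`-automaton finite). -/
theorem stmt4 (M : SetMonad) (hfin : ∀ X : Type, Finite X → Finite (M.T X))
    (A : Type) [Finite A] (O : AlgOver M) (L : List A → O.carrier) :
    (Set.range (tLang A L)).Finite ↔ (Set.range (tLangS M A O L)).Finite :=
  stmt4_general M hfin A O L
end

section
/- For any observation table over finite sets S, E ⊆ A* with ε ∈ S ∩ E, the cardinality of img(row_t♯ : T(S) → O^E) is at most the cardinality of img(t_L♯ : T(A*) → O^{A*}). (Hence the state space of any hypothesis automaton is no larger than that of the minimal T-automaton accepting L.) -/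
/-- The top part of the observation table: `row_t : S → O^E`, `row_t(s)(e) = L(se)`. -/
def rowT (A : Type) {Oc : Type} (L : List A → Oc) (S E : Set (List A)) :
    ↥S → ↥E → Oc :=
  fun s e => L (s.1 ++ e.1)

/-- The bottom part of the observation table: `row_b : S → (O^E)^A`,
`row_b(s)(a)(e) = L(sae)`. -/
def rowB (A : Type) {Oc : Type} (L : List A → Oc) (S E : Set (List A)) :
    ↥S → A → ↥E → Oc :=
  fun s a e => L (s.1 ++ a :: e.1)

/-- The free `T`-extension `row_t♯ : T(S) → O^E`. -/
def rowTs (M : SetMonad) (A : Type) (O : AlgOver M) (L : List A → O.carrier)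
    (S E : Set (List A)) : M.T ↥S → ↥E → O.carrier :=
  extAlg M (powAlg M (↥E) O) (rowT A L S E)

/-- The free `T`-extension `row_b♯ : T(S) → (O^E)^A`. -/
def rowBs (M : SetMonad) (A : Type) (O : AlgOver M) (L : List A → O.carrier)
    (S E : Set (List A)) : M.T ↥S → A → ↥E → O.carrier :=
  extAlg M (powAlg M A (powAlg M (↥E) O)) (rowB A L S E)

/-- the image of `row_t♯ : T(S) → O^E` has cardinality at most that of
the image of `t_L♯ : T(A*) → O^{A*}`. -/
theorem stmt6 (M : SetMonad) (A : Type) [Finite A] (O : AlgOver M)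
    (L : List A → O.carrier) (S E : Set (List A)) (hSfin : S.Finite) (hEfin : E.Finite)
    (hSe : [] ∈ S) (hEe : [] ∈ E) :
    Cardinal.mk ↥(Set.range (rowTs M A O L S E)) ≤
      Cardinal.mk ↥(Set.range (tLangS M A O L)) := by
  have hfac : rowTs M A O L S E =
      (fun f (e : ↥E) => f e.1) ∘ tLangS M A O L ∘ M.map (Subtype.val) := by
    funext t
    funext e
    show O.str (M.map (fun g => g e) (M.map (rowT A L S E) t)) =
      O.str (M.map (fun g => g e.1) (M.map (tLang A L) (M.map Subtype.val t)))
    rw [← M.map_comp, ← M.map_comp, ← M.map_comp]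
    rfl
  have hsub : Set.range (rowTs M A O L S E) ⊆
      (fun f (e : ↥E) => f e.1) '' Set.range (tLangS M A O L) := by
    rintro _ ⟨t, rfl⟩
    rw [hfac]
    exact ⟨tLangS M A O L (M.map Subtype.val t), ⟨_, rfl⟩, rfl⟩
  calc Cardinal.mk ↥(Set.range (rowTs M A O L S E))
      ≤ Cardinal.mk ↥((fun f (e : ↥E) => f e.1) '' Set.range (tLangS M A O L)) :=
        Cardinal.mk_le_mk_of_subset hsub
    _ ≤ Cardinal.mk ↥(Set.range (tLangS M A O L)) := Cardinal.mk_image_le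
end

section
/- Suppose the observation table over (S', E) is closed and consistent, let H be its hypothesis T-automaton with language L_H, let z ∈ A* satisfy L_H(z) ≠ L(z), and let S = S' ∪ prefixes(z), with the observation table extended to S. Then there exist u ∈ A* and a ∈ A such that ua is a prefix of z, and there exists U ∈ T(S') such that row_t(u) = row_t♯(U) and row_b(u)(a) ≠ row_b♯(U)(a). (In particular, adding all prefixes of a counterexample to S creates a consistency defect.) -/
theorem List.foldl_rel_of_isPrefix {α σ : Type*} (δ : σ → α → σ) (s₀ : σ) (z : List α)
    (R : σ → List α → Prop) (h₀ : R s₀ [])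
    (hstep : ∀ u a, u ++ [a] <+: z → ∀ s, R s u → R (δ s a) (u ++ [a])) :
    ∀ u, u <+: z → R (u.foldl δ s₀) u := by
  intro u
  induction u using List.reverseRecOn with
  | nil => exact fun _ => h₀
  | append_singleton u a ih =>
    intro hua
    rw [List.foldl_append, List.foldl_cons, List.foldl_nil]
    exact hstep u a hua _ (ih ((List.prefix_append u [a]).trans hua))

theorem hypothesis_step_eq_row {M : SetMonad} {A : Type} {O : AlgOver M}
    {L : List A → O.carrier} {S' E : Set (List A)}
    (δH : ↥(Set.range (rowTs M A O L S' E)) → A → ↥(Set.range (rowTs M A O L S' E)))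
    (hδH : ∀ (U : M.T ↥S') (a : A)
      (h : rowTs M A O L S' E U ∈ Set.range (rowTs M A O L S' E)),
      (δH ⟨rowTs M A O L S' E U, h⟩ a).1 = rowBs M A O L S' E U a)
    (u : List A) (a : A)
    (hagree : ∀ U : M.T ↥S', (fun e : ↥E => L (u ++ e.1)) = rowTs M A O L S' E U →
      (fun e : ↥E => L (u ++ a :: e.1)) = rowBs M A O L S' E U a)
    (s : ↥(Set.range (rowTs M A O L S' E))) (hs : s.1 = fun e : ↥E => L (u ++ e.1)) :
    (δH s a).1 = fun e : ↥E => L (u ++ [a] ++ e.1) := by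
  obtain ⟨U, hU⟩ := s.2
  have hsU : s = ⟨rowTs M A O L S' E U, Set.mem_range_self U⟩ := Subtype.ext hU.symm
  rw [hsU, hδH, ← hagree U (hs.symm.trans hU.symm)]
  simp

theorem stmt7_general (M : SetMonad) (A : Type) (O : AlgOver M)
    (L : List A → O.carrier) (S' E : Set (List A)) (hS'e : [] ∈ S') (hEe : [] ∈ E)
    -- the hypothesis automaton H on the state space img(row_t♯):
    (δH : ↥(Set.range (rowTs M A O L S' E)) → A → ↥(Set.range (rowTs M A O L S' E)))
    (hδH : ∀ (U : M.T ↥S') (a : A)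
      (h : rowTs M A O L S' E U ∈ Set.range (rowTs M A O L S' E)),
      (δH ⟨rowTs M A O L S' E U, h⟩ a).1 = rowBs M A O L S' E U a)
    (initH : ↥(Set.range (rowTs M A O L S' E)))
    (hinitH : initH.1 = rowT A L S' E ⟨[], hS'e⟩)
    -- z is a counterexample: L_H(z) ≠ L(z)
    (z : List A)
    (hz : (List.foldl δH initH z).1 ⟨[], hEe⟩ ≠ L z) :
    ∃ (u : List A) (a : A), (u ++ [a]) <+: z ∧
      ∃ U : M.T ↥S',
        (fun e : ↥E => L (u ++ e.1)) = rowTs M A O L S' E U ∧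
        (fun e : ↥E => L (u ++ a :: e.1)) ≠ rowBs M A O L S' E U a := by
  by_contra! hagree
  have hrun := List.foldl_rel_of_isPrefix δH initH z
    (fun s u => s.1 = fun e : ↥E => L (u ++ e.1)) hinitH
    (fun u a hua => hypothesis_step_eq_row δH hδH u a (hagree u a hua)) z (List.prefix_refl z)
  exact hz (by rw [hrun]; exact congrArg L (List.append_nil z))

/-- if `z` is a counterexample for the hypothesis built from the closed
and consistent table over `(S', E)`, then after adding all prefixes of `z` to `S'`
there is a consistency defect: some prefix `ua` of `z` and `U ∈ T(S')` satisfy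
`row_t(u) = row_t♯(U)` but `row_b(u)(a) ≠ row_b♯(U)(a)`. -/
theorem stmt7 (M : SetMonad) (A : Type) [Finite A] (O : AlgOver M)
    (L : List A → O.carrier) (S' E : Set (List A)) (hS'fin : S'.Finite)
    (hEfin : E.Finite) (hS'e : [] ∈ S') (hEe : [] ∈ E)
    -- the table over (S', E) is closed and consistent
    (hclosed : ∀ (U : M.T ↥S') (a : A), ∃ U' : M.T ↥S',
      rowTs M A O L S' E U' = rowBs M A O L S' E U a)
    (hcons : ∀ U₁ U₂ : M.T ↥S', rowTs M A O L S' E U₁ = rowTs M A O L S' E U₂ →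
      rowBs M A O L S' E U₁ = rowBs M A O L S' E U₂)
    -- the hypothesis automaton H on the state space img(row_t♯):
    (δH : ↥(Set.range (rowTs M A O L S' E)) → A → ↥(Set.range (rowTs M A O L S' E)))
    (hδH : ∀ (U : M.T ↥S') (a : A)
      (h : rowTs M A O L S' E U ∈ Set.range (rowTs M A O L S' E)),
      (δH ⟨rowTs M A O L S' E U, h⟩ a).1 = rowBs M A O L S' E U a)
    (initH : ↥(Set.range (rowTs M A O L S' E)))
    (hinitH : initH.1 = rowT A L S' E ⟨[], hS'e⟩)
    -- z is a counterexample: L_H(z) ≠ L(z)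
    (z : List A)
    (hz : (List.foldl δH initH z).1 ⟨[], hEe⟩ ≠ L z)
    -- S extends S' with all prefixes of z
    (S : Set (List A)) (hS : S = S' ∪ {w | w <+: z}) :
    ∃ (u : List A) (a : A), (u ++ [a]) <+: z ∧
      ∃ U : M.T ↥S',
        (fun e : ↥E => L (u ++ e.1)) = rowTs M A O L S' E U ∧
        (fun e : ↥E => L (u ++ a :: e.1)) ≠ rowBs M A O L S' E U a :=
  stmt7_general M A O L S' E hS'e hEe δH hδH initH hinitH z hz
end

section
/- If z ∈ A* is such that L_H(z) ≠ L(z), then t_L(z)(ε) ≠ R(z)(ε). -/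
/-- if `z` is a counterexample, `L_H(z) ≠ L(z)`, then
`t_L(z)(ε) ≠ R(z)(ε)`, where `R(u) = t_L♯(U_{q_u})` and `q_u = r_H(u)`. -/
theorem stmt8 (M : SetMonad) (A : Type) [Finite A] (O : AlgOver M)
    (L : List A → O.carrier) (S E : Set (List A)) (hSfin : S.Finite)
    (hEfin : E.Finite) (hSe : [] ∈ S) (hEe : [] ∈ E)
    -- the table over (S, E) is closed and consistent
    (hclosed : ∀ (U : M.T ↥S) (a : A), ∃ U' : M.T ↥S,
      rowTs M A O L S E U' = rowBs M A O L S E U a)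
    (hcons : ∀ U₁ U₂ : M.T ↥S, rowTs M A O L S E U₁ = rowTs M A O L S E U₂ →
      rowBs M A O L S E U₁ = rowBs M A O L S E U₂)
    -- the hypothesis automaton H on the state space img(row_t♯):
    (δH : ↥(Set.range (rowTs M A O L S E)) → A → ↥(Set.range (rowTs M A O L S E)))
    (hδH : ∀ (U : M.T ↥S) (a : A)
      (h : rowTs M A O L S E U ∈ Set.range (rowTs M A O L S E)),
      (δH ⟨rowTs M A O L S E U, h⟩ a).1 = rowBs M A O L S E U a)
    (initH : ↥(Set.range (rowTs M A O L S E)))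
    (hinitH : initH.1 = rowT A L S E ⟨[], hSe⟩)
    -- for each state q of H, a chosen U_q ∈ T(S) with row_t♯(U_q) = q
    (Usel : ↥(Set.range (rowTs M A O L S E)) → M.T ↥S)
    (hUsel : ∀ q, rowTs M A O L S E (Usel q) = q.1)
    (z : List A)
    (hz : (List.foldl δH initH z).1 ⟨[], hEe⟩ ≠ L z) :
    tLang A L z [] ≠
      tLangS M A O L (M.map Subtype.val (Usel (List.foldl δH initH z))) [] := by
  set q := List.foldl δH initH z with hq
  have key : tLangS M A O L (M.map Subtype.val (Usel q)) []
      = rowTs M A O L S E (Usel q) ⟨[], hEe⟩ := by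
    show O.str (M.map (fun g => g []) (M.map (tLang A L) (M.map Subtype.val (Usel q))))
      = O.str (M.map (fun g => g (⟨[], hEe⟩ : ↥E)) (M.map (rowT A L S E) (Usel q)))
    rw [← M.map_comp, ← M.map_comp, ← M.map_comp]
    congr 1
  intro heq
  apply hz
  have : (q.1 : ↥E → O.carrier) ⟨[], hEe⟩ = L z := by
    rw [← hUsel q, ← key, ← heq]
    simp [tLang]
  exact this
end

section
/- Assume additionally that U_{q_ε} = η(ε). If z ∈ A* is such that L_H(z) ≠ L(z), then there exist u, v ∈ A* and a ∈ A with uav = z such that row_t♯(U_{q_{ua}}) = row_b♯(U_{q_u})(a) and t_L♯(U_{q_{ua}})(v) ≠ t_L♯(U_{q_u})(av). (Thus adding the suffix v as a column either produces a closedness defect or distinguishes two previously equal rows.) -/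
private theorem chain_diff {α : Type} (g : ℕ → α) :
    ∀ n : ℕ, g 0 ≠ g n → ∃ i < n, g i ≠ g (i + 1) := by
  intro n
  induction n with
  | zero => intro h; exact absurd rfl h
  | succ m ih =>
    intro h
    by_cases hm : g m = g (m + 1)
    · obtain ⟨i, hi, hne⟩ := ih (fun he => h (he.trans hm))
      exact ⟨i, Nat.lt_succ_of_lt hi, hne⟩
    · exact ⟨m, Nat.lt_succ_self m, hm⟩

/-- assuming `U_{q_ε} = η(ε)`, every counterexample `z` decomposes as
`z = uav` with `row_t♯(U_{q_{ua}}) = row_b♯(U_{q_u})(a)` and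
`t_L♯(U_{q_{ua}})(v) ≠ t_L♯(U_{q_u})(av)`. -/
theorem stmt10 (M : SetMonad) (A : Type) [Finite A] (O : AlgOver M)
    (L : List A → O.carrier) (S E : Set (List A)) (hSfin : S.Finite)
    (hEfin : E.Finite) (hSe : [] ∈ S) (hEe : [] ∈ E)
    -- the table over (S, E) is closed and consistent
    (hclosed : ∀ (U : M.T ↥S) (a : A), ∃ U' : M.T ↥S,
      rowTs M A O L S E U' = rowBs M A O L S E U a)
    (hcons : ∀ U₁ U₂ : M.T ↥S, rowTs M A O L S E U₁ = rowTs M A O L S E U₂ →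
      rowBs M A O L S E U₁ = rowBs M A O L S E U₂)
    -- the hypothesis automaton H on the state space img(row_t♯):
    (δH : ↥(Set.range (rowTs M A O L S E)) → A → ↥(Set.range (rowTs M A O L S E)))
    (hδH : ∀ (U : M.T ↥S) (a : A)
      (h : rowTs M A O L S E U ∈ Set.range (rowTs M A O L S E)),
      (δH ⟨rowTs M A O L S E U, h⟩ a).1 = rowBs M A O L S E U a)
    (initH : ↥(Set.range (rowTs M A O L S E)))
    (hinitH : initH.1 = rowT A L S E ⟨[], hSe⟩)
    -- for each state q of H, a chosen U_q ∈ T(S) with row_t♯(U_q) = q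
    (Usel : ↥(Set.range (rowTs M A O L S E)) → M.T ↥S)
    (hUsel : ∀ q, rowTs M A O L S E (Usel q) = q.1)
    (hUinit : Usel initH = M.pure (⟨[], hSe⟩ : ↥S))
    (z : List A)
    (hz : (List.foldl δH initH z).1 ⟨[], hEe⟩ ≠ L z) :
    ∃ (u v : List A) (a : A), u ++ a :: v = z ∧
      rowTs M A O L S E (Usel (List.foldl δH initH (u ++ [a]))) =
        rowBs M A O L S E (Usel (List.foldl δH initH u)) a ∧
      tLangS M A O L (M.map Subtype.val (Usel (List.foldl δH initH (u ++ [a])))) v ≠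
      tLangS M A O L (M.map Subtype.val (Usel (List.foldl δH initH u))) (a :: v) := by
  classical
  set n := z.length with hn
  set g : ℕ → O.carrier := fun i =>
    tLangS M A O L (M.map Subtype.val (Usel (List.foldl δH initH (z.take i)))) (z.drop i)
    with hgdef
  have hg0 : g 0 = L z := by
    simp only [hgdef, List.take_zero, List.drop_zero, List.foldl_nil, hUinit]
    show O.str (M.map (fun h => h z) (M.map (tLang A L)
      (M.map Subtype.val (M.pure (⟨[], hSe⟩ : ↥S))))) = L z
    rw [M.pure_natural, M.pure_natural, M.pure_natural, O.str_pure]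
    rfl
  have hgn : g n = (List.foldl δH initH z).1 ⟨[], hEe⟩ := by
    rw [← hUsel (List.foldl δH initH z)]
    simp only [hgdef, hn, List.take_length, List.drop_length, tLangS, extAlg, powAlg,
      tLang, rowTs, rowT]
    rw [← M.map_comp, ← M.map_comp, ← M.map_comp]
    rfl
  obtain ⟨i, hin, hgi⟩ := chain_diff g n (by
    rw [hg0, hgn]; exact fun h => hz h.symm)
  have hin' : i < z.length := hin
  have key : ∀ (q : ↥(Set.range (rowTs M A O L S E))) (a : A),
      rowTs M A O L S E (Usel (δH q a)) = rowBs M A O L S E (Usel q) a := by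
    intro q a
    have hmem : rowTs M A O L S E (Usel q) ∈ Set.range (rowTs M A O L S E) :=
      ⟨Usel q, rfl⟩
    have hq : (⟨rowTs M A O L S E (Usel q), hmem⟩ :
        ↥(Set.range (rowTs M A O L S E))) = q := Subtype.ext (hUsel q)
    have h := hδH (Usel q) a hmem
    rw [hq] at h
    rw [hUsel]
    exact h
  have hta : z.take (i + 1) = z.take i ++ [z[i]] := (List.take_concat_get' z i hin').symm
  have hda : z.drop i = z[i] :: z.drop (i + 1) := List.drop_eq_getElem_cons hin'
  refine ⟨z.take i, z.drop (i + 1), z[i], ?_, ?_, ?_⟩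
  · rw [← hda]; exact List.take_append_drop i z
  · rw [List.foldl_append, List.foldl_cons, List.foldl_nil]
    exact key _ _
  · intro h
    apply hgi
    simp only [hgdef]
    rw [hta, hda, List.foldl_append, List.foldl_cons, List.foldl_nil] at *
    exact h.symm
end

section
/- For any set of generators S' for a closed and consistent observation table and any right inverse i of e, the succinct hypothesis S accepts the same language as the hypothesis H: o_S(init_S) = o_H(init_H), i.e., L_S = L_H. -/
/-- the succinct hypothesis (with states `T(S')`, initial state
`i(row_t(ε))`, output `U ↦ row_t♯(U)(ε)` and transitions `δS(U)(a) = i(row_b♯(U)(a))`)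
accepts the same language as the hypothesis `H`: `L_S = L_H`. -/
theorem stmt11 (M : SetMonad) (A : Type) [Finite A] (O : AlgOver M)
    (L : List A → O.carrier) (S E : Set (List A)) (hSfin : S.Finite)
    (hEfin : E.Finite) (hSe : [] ∈ S) (hEe : [] ∈ E)
    -- the table over (S, E) is closed and consistent
    (hclosed : ∀ (U : M.T ↥S) (a : A), ∃ U' : M.T ↥S,
      rowTs M A O L S E U' = rowBs M A O L S E U a)
    (hcons : ∀ U₁ U₂ : M.T ↥S, rowTs M A O L S E U₁ = rowTs M A O L S E U₂ →
      rowBs M A O L S E U₁ = rowBs M A O L S E U₂)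
    -- the hypothesis automaton H on the state space img(row_t♯):
    (δH : ↥(Set.range (rowTs M A O L S E)) → A → ↥(Set.range (rowTs M A O L S E)))
    (hδH : ∀ (U : M.T ↥S) (a : A)
      (h : rowTs M A O L S E U ∈ Set.range (rowTs M A O L S E)),
      (δH ⟨rowTs M A O L S E U, h⟩ a).1 = rowBs M A O L S E U a)
    (initH : ↥(Set.range (rowTs M A O L S E)))
    (hinitH : initH.1 = rowT A L S E ⟨[], hSe⟩)
    -- S' ⊆ S is a set of generators for the table
    (S' : Set (List A)) (hsub : S' ⊆ S)
    (hgen : ∀ s : ↥S, ∃ U : M.T ↥S',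
      rowT A L S E s = rowTs M A O L S E (M.map (Set.inclusion hsub) U))
    -- e : T(S') → H is the restriction of row_t♯, and i is a right inverse of e
    (i : ↥(Set.range (rowTs M A O L S E)) → M.T ↥S')
    (hi : ∀ q, rowTs M A O L S E (M.map (Set.inclusion hsub) (i q)) = q.1)
    -- the transition map of the succinct hypothesis: δS(U)(a) = i(row_b♯(U)(a))
    (δS : M.T ↥S' → A → M.T ↥S')
    (hδS : ∀ (U : M.T ↥S') (a : A) (q : ↥(Set.range (rowTs M A O L S E))),
      q.1 = rowBs M A O L S E (M.map (Set.inclusion hsub) U) a → δS U a = i q)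
 :
    ∀ w : List A,
      rowTs M A O L S E (M.map (Set.inclusion hsub) (List.foldl δS (i initH) w))
          ⟨[], hEe⟩ =
        (List.foldl δH initH w).1 ⟨[], hEe⟩ := by
  have key : ∀ (w : List A) (U : M.T ↥S') (q : ↥(Set.range (rowTs M A O L S E))),
      rowTs M A O L S E (M.map (Set.inclusion hsub) U) = q.1 →
      rowTs M A O L S E (M.map (Set.inclusion hsub) (List.foldl δS U w)) =
        (List.foldl δH q w).1 := by
    intro w
    induction w with
    | nil => intro U q h; exact h
    | cons a w ih =>
      intro U q h
      simp only [List.foldl_cons]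
      apply ih
      obtain ⟨U', hU'⟩ := hclosed (M.map (Set.inclusion hsub) U) a
      have hmem : rowBs M A O L S E (M.map (Set.inclusion hsub) U) a ∈
          Set.range (rowTs M A O L S E) := ⟨U', hU'⟩
      rw [hδS U a ⟨_, hmem⟩ rfl, hi]
      have hq : q = ⟨rowTs M A O L S E (M.map (Set.inclusion hsub) U), ⟨_, rfl⟩⟩ :=
        Subtype.ext h.symm
      rw [hq]
      exact (hδH _ a _).symm
  intro w
  exact congrFun (key w (i initH) initH (hi initH)) _
end

section
/- For any set of generators S' for a closed and consistent observation table and any right inverse i of e, the observability map of the hypothesis composed with e equals the observability map of the succinct hypothesis: for every U ∈ T(S') and every word w ∈ A*, o_H(e(U))(w) = o_S(U)(w). -/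
/-- the observability map of the hypothesis composed with `e` equals the
observability map of the succinct hypothesis: `o_H(e(U))(w) = o_S(U)(w)` for all
`U ∈ T(S')` and words `w`. -/
theorem stmt12 (M : SetMonad) (A : Type) [Finite A] (O : AlgOver M)
    (L : List A → O.carrier) (S E : Set (List A)) (hSfin : S.Finite)
    (hEfin : E.Finite) (hSe : [] ∈ S) (hEe : [] ∈ E)
    -- the table over (S, E) is closed and consistent
    (hclosed : ∀ (U : M.T ↥S) (a : A), ∃ U' : M.T ↥S,
      rowTs M A O L S E U' = rowBs M A O L S E U a)
    (hcons : ∀ U₁ U₂ : M.T ↥S, rowTs M A O L S E U₁ = rowTs M A O L S E U₂ →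
      rowBs M A O L S E U₁ = rowBs M A O L S E U₂)
    -- the hypothesis automaton H on the state space img(row_t♯):
    (δH : ↥(Set.range (rowTs M A O L S E)) → A → ↥(Set.range (rowTs M A O L S E)))
    (hδH : ∀ (U : M.T ↥S) (a : A)
      (h : rowTs M A O L S E U ∈ Set.range (rowTs M A O L S E)),
      (δH ⟨rowTs M A O L S E U, h⟩ a).1 = rowBs M A O L S E U a)
    (initH : ↥(Set.range (rowTs M A O L S E)))
    (hinitH : initH.1 = rowT A L S E ⟨[], hSe⟩)
    -- S' ⊆ S is a set of generators for the table
    (S' : Set (List A)) (hsub : S' ⊆ S)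
    (hgen : ∀ s : ↥S, ∃ U : M.T ↥S',
      rowT A L S E s = rowTs M A O L S E (M.map (Set.inclusion hsub) U))
    -- e : T(S') → H is the restriction of row_t♯, and i is a right inverse of e
    (i : ↥(Set.range (rowTs M A O L S E)) → M.T ↥S')
    (hi : ∀ q, rowTs M A O L S E (M.map (Set.inclusion hsub) (i q)) = q.1)
    -- the transition map of the succinct hypothesis: δS(U)(a) = i(row_b♯(U)(a))
    (δS : M.T ↥S' → A → M.T ↥S')
    (hδS : ∀ (U : M.T ↥S') (a : A) (q : ↥(Set.range (rowTs M A O L S E))),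
      q.1 = rowBs M A O L S E (M.map (Set.inclusion hsub) U) a → δS U a = i q)
 :
    ∀ (U : M.T ↥S') (w : List A),
      (List.foldl δH
          ⟨rowTs M A O L S E (M.map (Set.inclusion hsub) U), Set.mem_range_self _⟩
          w).1 ⟨[], hEe⟩ =
        rowTs M A O L S E (M.map (Set.inclusion hsub) (List.foldl δS U w))
          ⟨[], hEe⟩ := by
  have key : ∀ (w : List A) (U : M.T ↥S'),
      List.foldl δH
          ⟨rowTs M A O L S E (M.map (Set.inclusion hsub) U), Set.mem_range_self _⟩ w =
        ⟨rowTs M A O L S E (M.map (Set.inclusion hsub) (List.foldl δS U w)),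
          Set.mem_range_self _⟩ := by
    intro w
    induction w with
    | nil => intro U; rfl
    | cons a w ih =>
      intro U
      have hmem : rowBs M A O L S E (M.map (Set.inclusion hsub) U) a ∈
          Set.range (rowTs M A O L S E) := by
        obtain ⟨U', hU'⟩ := hclosed (M.map (Set.inclusion hsub) U) a
        exact ⟨U', hU'⟩
      set q : ↥(Set.range (rowTs M A O L S E)) :=
        ⟨rowBs M A O L S E (M.map (Set.inclusion hsub) U) a, hmem⟩
      have hstep : δH ⟨rowTs M A O L S E (M.map (Set.inclusion hsub) U),
          Set.mem_range_self _⟩ a =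
          ⟨rowTs M A O L S E (M.map (Set.inclusion hsub) (δS U a)),
            Set.mem_range_self _⟩ := by
        apply Subtype.ext
        rw [hδH (M.map (Set.inclusion hsub) U) a]
        show _ = rowTs M A O L S E (M.map (Set.inclusion hsub) (δS U a))
        rw [hδS U a q rfl]
        exact (hi q).symm
      show List.foldl δH (δH _ a) w = _
      rw [hstep, ih (δS U a)]
      rfl
  intro U w
  rw [key w U]
end

section
/- Define R : A* → O^{A*} by R(u) = t_L♯(i(r_H(u))), where r_H is the reachability map of the hypothesis H and i is the chosen right inverse of e. Then for all u ∈ A*, R(u) = t_L♯(r_S(u)), where r_S is the reachability map of the succinct hypothesis. -/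
/-- with `R(u) = t_L♯(i(r_H(u)))`, for all `u ∈ A*` one has
`R(u) = t_L♯(r_S(u))`, where `r_S` is the reachability map of the succinct
hypothesis. -/
theorem stmt15 (M : SetMonad) (A : Type) [Finite A] (O : AlgOver M)
    (L : List A → O.carrier) (S E : Set (List A)) (hSfin : S.Finite)
    (hEfin : E.Finite) (hSe : [] ∈ S) (hEe : [] ∈ E)
    -- the table over (S, E) is closed and consistent
    (hclosed : ∀ (U : M.T ↥S) (a : A), ∃ U' : M.T ↥S,
      rowTs M A O L S E U' = rowBs M A O L S E U a)
    (hcons : ∀ U₁ U₂ : M.T ↥S, rowTs M A O L S E U₁ = rowTs M A O L S E U₂ →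
      rowBs M A O L S E U₁ = rowBs M A O L S E U₂)
    -- the hypothesis automaton H on the state space img(row_t♯):
    (δH : ↥(Set.range (rowTs M A O L S E)) → A → ↥(Set.range (rowTs M A O L S E)))
    (hδH : ∀ (U : M.T ↥S) (a : A)
      (h : rowTs M A O L S E U ∈ Set.range (rowTs M A O L S E)),
      (δH ⟨rowTs M A O L S E U, h⟩ a).1 = rowBs M A O L S E U a)
    (initH : ↥(Set.range (rowTs M A O L S E)))
    (hinitH : initH.1 = rowT A L S E ⟨[], hSe⟩)
    -- S' ⊆ S is a set of generators for the table
    (S' : Set (List A)) (hsub : S' ⊆ S)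
    (hgen : ∀ s : ↥S, ∃ U : M.T ↥S',
      rowT A L S E s = rowTs M A O L S E (M.map (Set.inclusion hsub) U))
    -- e : T(S') → H is the restriction of row_t♯, and i is a right inverse of e
    (i : ↥(Set.range (rowTs M A O L S E)) → M.T ↥S')
    (hi : ∀ q, rowTs M A O L S E (M.map (Set.inclusion hsub) (i q)) = q.1)
    -- the transition map of the succinct hypothesis: δS(U)(a) = i(row_b♯(U)(a))
    (δS : M.T ↥S' → A → M.T ↥S')
    (hδS : ∀ (U : M.T ↥S') (a : A) (q : ↥(Set.range (rowTs M A O L S E))),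
      q.1 = rowBs M A O L S E (M.map (Set.inclusion hsub) U) a → δS U a = i q)
 :
    ∀ u : List A,
      tLangS M A O L (M.map Subtype.val (i (List.foldl δH initH u))) =
      tLangS M A O L (M.map Subtype.val (List.foldl δS (i initH) u)) := by
  have step : ∀ (q : ↥(Set.range (rowTs M A O L S E))) (a : A),
      δS (i q) a = i (δH q a) := by
    intro q a
    apply hδS
    have hq : q.1 ∈ Set.range (rowTs M A O L S E) := q.2
    have hq' : rowTs M A O L S E (M.map (Set.inclusion hsub) (i q)) ∈
        Set.range (rowTs M A O L S E) := ⟨_, rfl⟩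
    have := hδH (M.map (Set.inclusion hsub) (i q)) a hq'
    have heq : (⟨rowTs M A O L S E (M.map (Set.inclusion hsub) (i q)), hq'⟩ :
        ↥(Set.range (rowTs M A O L S E))) = q := Subtype.ext (hi q)
    rw [heq] at this
    exact this
  have main : ∀ (u : List A) (q : ↥(Set.range (rowTs M A O L S E))),
      List.foldl δS (i q) u = i (List.foldl δH q u) := by
    intro u
    induction u with
    | nil => intro q; rfl
    | cons a u ih =>
      intro q
      simp only [List.foldl_cons, step q a, ih (δH q a)]
  intro u
  rw [main u initH]
end

section
/- For all words u ∈ A*, the reachability map of the succinct hypothesis satisfies r_S(u) = i(r_H(u)), where r_H is the reachability map of the hypothesis H and i is the chosen right inverse of e. -/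
/-- the reachability map of the succinct hypothesis satisfies
`r_S(u) = i(r_H(u))` for all words `u`. -/
theorem stmt16 (M : SetMonad) (A : Type) [Finite A] (O : AlgOver M)
    (L : List A → O.carrier) (S E : Set (List A)) (hSfin : S.Finite)
    (hEfin : E.Finite) (hSe : [] ∈ S) (hEe : [] ∈ E)
    -- the table over (S, E) is closed and consistent
    (hclosed : ∀ (U : M.T ↥S) (a : A), ∃ U' : M.T ↥S,
      rowTs M A O L S E U' = rowBs M A O L S E U a)
    (hcons : ∀ U₁ U₂ : M.T ↥S, rowTs M A O L S E U₁ = rowTs M A O L S E U₂ →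
      rowBs M A O L S E U₁ = rowBs M A O L S E U₂)
    -- the hypothesis automaton H on the state space img(row_t♯):
    (δH : ↥(Set.range (rowTs M A O L S E)) → A → ↥(Set.range (rowTs M A O L S E)))
    (hδH : ∀ (U : M.T ↥S) (a : A)
      (h : rowTs M A O L S E U ∈ Set.range (rowTs M A O L S E)),
      (δH ⟨rowTs M A O L S E U, h⟩ a).1 = rowBs M A O L S E U a)
    (initH : ↥(Set.range (rowTs M A O L S E)))
    (hinitH : initH.1 = rowT A L S E ⟨[], hSe⟩)
    -- S' ⊆ S is a set of generators for the table
    (S' : Set (List A)) (hsub : S' ⊆ S)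
    (hgen : ∀ s : ↥S, ∃ U : M.T ↥S',
      rowT A L S E s = rowTs M A O L S E (M.map (Set.inclusion hsub) U))
    -- e : T(S') → H is the restriction of row_t♯, and i is a right inverse of e
    (i : ↥(Set.range (rowTs M A O L S E)) → M.T ↥S')
    (hi : ∀ q, rowTs M A O L S E (M.map (Set.inclusion hsub) (i q)) = q.1)
    -- the transition map of the succinct hypothesis: δS(U)(a) = i(row_b♯(U)(a))
    (δS : M.T ↥S' → A → M.T ↥S')
    (hδS : ∀ (U : M.T ↥S') (a : A) (q : ↥(Set.range (rowTs M A O L S E))),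
      q.1 = rowBs M A O L S E (M.map (Set.inclusion hsub) U) a → δS U a = i q)
 :
    ∀ u : List A,
      List.foldl δS (i initH) u = i (List.foldl δH initH u) := by
  have step : ∀ (q : ↥(Set.range (rowTs M A O L S E))) (a : A),
      δS (i q) a = i (δH q a) := by
    intro q a
    have hmem : rowTs M A O L S E (M.map (Set.inclusion hsub) (i q)) ∈
        Set.range (rowTs M A O L S E) := ⟨_, rfl⟩
    have hq : (⟨rowTs M A O L S E (M.map (Set.inclusion hsub) (i q)), hmem⟩ :
        ↥(Set.range (rowTs M A O L S E))) = q := Subtype.ext (hi q)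
    have h1 := hδH (M.map (Set.inclusion hsub) (i q)) a hmem
    rw [hq] at h1
    exact hδS (i q) a (δH q a) h1
  suffices h : ∀ (u : List A) (q : ↥(Set.range (rowTs M A O L S E))),
      List.foldl δS (i q) u = i (List.foldl δH q u) by
    intro u; exact h u initH
  intro u
  induction u with
  | nil => intro q; rfl
  | cons a u ih => intro q; simp only [List.foldl_cons, step]; exact ih (δH q a)
end

section
/- Fix p ∈ ℕ and the one-letter alphabet A = {a}, and let L : A* → Bool be the characteristic function of the single word a^p, i.e., L(w) = true iff |w| = p. Define t_L : A* → Bool^{A*} by t_L(u)(v) = L(uv), and for a set of words U ⊆ A* define t_L♯(U) ∈ Bool^{A*} by t_L♯(U)(v) = true iff there exists u ∈ U with L(uv) = true (the free extension of t_L along the powerset monad, with Bool the join-semilattice (Bool, ∨)). Then the image {t_L(u) : u ∈ A*} has exactly p + 2 elements, while the image {t_L♯(U) : U ⊆ A*} has exactly 2^{p+1} elements; indeed {t_L♯(U) : U ⊆ A*} consists precisely of the characteristic functions of all subsets of {a^i : 0 ≤ i ≤ p}. (Hence the minimal DFA for L has p + 2 states while the minimal join-semilattice automaton has 2^{p+1}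 states, an exponential gap.) -/
open scoped Classical

lemma unit_eq_rep (v : List Unit) : v = List.replicate v.length () := by
  apply (List.eq_replicate_length).mpr
  intro b _; rfl

/-- for the language `L = {a^p}` over the one-letter alphabet, the set of
residual languages `{t_L(u) : u ∈ A*}` has exactly `p + 2` elements, while the set of
residuals with respect to sets of words, `{t_L♯(U) : U ⊆ A*}`, has exactly `2^(p+1)`
elements and consists precisely of the characteristic functions of the subsets of
`{a^i : 0 ≤ i ≤ p}`. -/
theorem stmt18 (p : ℕ) :
    let L : List Unit → Bool := fun w => decide (w.length = p)
    let tL : List Unit → (List Unit → Bool) := fun u v => L (u ++ v)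
    let tLs : Set (List Unit) → (List Unit → Bool) :=
      fun U v => decide (∃ u ∈ U, L (u ++ v) = true)
    Nat.card ↥(Set.range tL) = p + 2 ∧
    Nat.card ↥(Set.range tLs) = 2 ^ (p + 1) ∧
    Set.range tLs =
      {f | ∃ K : Set (List Unit), K ⊆ {w | w.length ≤ p} ∧
        f = fun v => decide (v ∈ K)} := by
  intro L tL tLs
  have huniq : ∀ v w : List Unit, v.length = w.length → v = w := by
    intro v w h
    rw [unit_eq_rep v, unit_eq_rep w, h]
  -- Part 3
  have hset : Set.range tLs =
      {f | ∃ K : Set (List Unit), K ⊆ {w | w.length ≤ p} ∧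
        f = fun v => decide (v ∈ K)} := by
    ext f
    constructor
    · rintro ⟨U, rfl⟩
      refine ⟨{v | v.length ≤ p ∧ List.replicate (p - v.length) () ∈ U},
        fun v hv => hv.1, ?_⟩
      funext v
      simp only [tLs, L, decide_eq_true_eq, Set.mem_setOf_eq, decide_eq_decide]
      constructor
      · rintro ⟨u, hu, hlen⟩
        rw [List.length_append] at hlen
        have hv : v.length ≤ p := by omega
        refine ⟨hv, ?_⟩
        have : u = List.replicate (p - v.length) () := by
          apply huniq; simp only [List.length_append, List.length_replicate]; omega
        rwa [← this]
      · rintro ⟨hv, hu⟩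
        exact ⟨_, hu, by simp only [List.length_append, List.length_replicate]; omega⟩
    · rintro ⟨K, hK, rfl⟩
      refine ⟨{u | u.length ≤ p ∧ List.replicate (p - u.length) () ∈ K}, ?_⟩
      funext v
      simp only [tLs, L, decide_eq_true_eq, Set.mem_setOf_eq, decide_eq_decide,
        List.length_append]
      constructor
      · rintro ⟨u, ⟨hu, hmem⟩, hlen⟩
        have : List.replicate (p - u.length) () = v := by
          apply huniq; simp only [List.length_append, List.length_replicate]; omega
        rwa [← this]
      · intro hv
        have hvp : v.length ≤ p := hK hv
        refine ⟨List.replicate (p - v.length) (), ⟨by simp only [List.length_append, List.length_replicate]; omega, ?_⟩, by simp only [List.length_append, List.length_replicate]; omega⟩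
        have : List.replicate (p - (List.replicate (p - v.length) ()).length) () = v := by
          apply huniq; simp only [List.length_append, List.length_replicate]; omega
        rwa [this]
  refine ⟨?_, ?_, hset⟩
  -- Part 1
  · set g : Fin (p + 2) → (List Unit → Bool) := fun i => tL (List.replicate i ()) with hg
    have hrange : Set.range tL = Set.range g := by
      ext f
      constructor
      · rintro ⟨u, rfl⟩
        by_cases h : u.length ≤ p + 1
        · exact ⟨⟨u.length, by omega⟩, congrArg tL (unit_eq_rep u).symm⟩
        · refine ⟨⟨p + 1, by omega⟩, ?_⟩
          funext v
          simp only [hg, tL, L, List.length_append, List.length_replicate,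
            decide_eq_decide]
          omega
      · rintro ⟨i, rfl⟩; exact ⟨_, rfl⟩
    rw [hrange]
    have hinj : Function.Injective g := by
      intro i j h
      have h1 := congrFun h (List.replicate (p - i) ())
      have h2 := congrFun h (List.replicate (p - j) ())
      simp only [hg, tL, L, List.length_append, List.length_replicate,
        decide_eq_decide] at h1 h2
      have hi := i.isLt
      have hj := j.isLt
      ext
      omega
    rw [Nat.card_range_of_injective hinj]
    simp
  -- Part 2
  · rw [hset]
    set Φ : (Fin (p + 1) → Bool) → (List Unit → Bool) :=
      fun g v => if h : v.length ≤ p then g ⟨v.length, by omega⟩ else false with hΦ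
    have heq : {f | ∃ K : Set (List Unit), K ⊆ {w | w.length ≤ p} ∧
        f = fun v => decide (v ∈ K)} = Set.range Φ := by
      ext f
      constructor
      · rintro ⟨K, hK, rfl⟩
        refine ⟨fun i => decide (List.replicate (i : ℕ) () ∈ K), ?_⟩
        funext v
        simp only [hΦ]
        split_ifs with h
        · rw [← unit_eq_rep v]
        · rw [eq_comm, decide_eq_false_iff_not]
          intro hm
          exact h (hK hm)
      · rintro ⟨g, rfl⟩
        refine ⟨{v | Φ g v = true}, ?_, ?_⟩
        · intro v hv
          simp only [hΦ, Set.mem_setOf_eq] at hv ⊢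
          by_contra hc
          rw [dif_neg (by omega)] at hv
          exact Bool.false_ne_true hv
        · funext v
          simp
    rw [heq]
    have hinj : Function.Injective Φ := by
      intro g g' h
      funext i
      have := congrFun h (List.replicate (i : ℕ) ())
      simp only [hΦ, List.length_replicate] at this
      rw [dif_pos (by omega), dif_pos (by omega)] at this
      simpa using this
    rw [Nat.card_range_of_injective hinj, Nat.card_eq_fintype_card]
    simp
end

section
/- Let E be a finite set, X a finite set of Boolean vectors x : E → Bool, and r : E → Bool. Define Y = { {x ∈ X | x(e) = true} | e ∈ E, r(e) = true } ⊆ P(X). Then the following are equivalent: (i) there exists a family Y' ⊆ P(X) such that for every e ∈ E, r(e) = ⋁_{W ∈ Y'} ⋀_{x ∈ W} x(e); (ii) for every e ∈ E, r(e) = ⋁_{W ∈ Y} ⋀_{x ∈ W} x(e). (Here the empty conjunction is true and the empty disjunction is false.) That is, r is expressible as a DNF combination of the vectors in X if and only if it equals the specific DNF combination determined by Y. -/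
/-- Angluin–Eisenstat–Fisman: a Boolean vector `r : E → Bool` is
expressible as a DNF combination of vectors from `X` iff it equals the specific DNF
combination determined by `Y = {{x ∈ X | x(e) = true} | e ∈ E, r(e) = true}`.
Disjunctions/conjunctions are expressed via `∃`/`∀` (empty conjunction true, empty
disjunction false). -/
theorem stmt19 (E : Type) [Finite E] (X : Set (E → Bool)) (hX : X.Finite)
    (r : E → Bool) :
    (∃ Y' : Set (Set (E → Bool)), (∀ W ∈ Y', W ⊆ X) ∧
      ∀ e : E, r e = true ↔ ∃ W ∈ Y', ∀ x ∈ W, x e = true) ↔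
    (∀ e : E, r e = true ↔
      ∃ W ∈ {W : Set (E → Bool) | ∃ e' : E, r e' = true ∧
        W = {x ∈ X | x e' = true}},
      ∀ x ∈ W, x e = true) := by
  constructor
  · rintro ⟨Y', hY'X, hY'⟩ e
    constructor
    · intro hre
      exact ⟨{x ∈ X | x e = true}, ⟨e, hre, rfl⟩, fun x hx => hx.2⟩
    · rintro ⟨W, ⟨e', hre', rfl⟩, hW⟩
      obtain ⟨W', hW'Y', hW'⟩ := (hY' e').mp hre'
      exact (hY' e).mpr ⟨W', hW'Y', fun x hx => hW x ⟨hY'X W' hW'Y' hx, hW' x hx⟩⟩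
  · intro h
    refine ⟨_, ?_, h⟩
    rintro W ⟨e', _, rfl⟩ x hx
    exact hx.1
end
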